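/- arXiv:math/0302149 — 4 statements merged into one kernel-verified Lean document; each statement's English description precedes it below -/
import Mathlib

section
/- Let λ ∈ ℂ with λ ≠ 0, λ ≠ 1 and λ² − λ + 1 ≠ 0. Let f(X) = X(X−1)(X−λ), let x₁, x₂ satisfy x₁ + x₂ = 2(λ+1)/3 and x₁·x₂ = λ/3, and let a, b ∈ ℂ be any complex numbers with a² = f(x₁) and b² = f(x₂). Then the four complex numbers a, −a, b, −b are pairwise distinct (in particular the direct image connection has four distinct singular points in the generic case). -/
/-- In the generic case `λ ≠ 0, 1` and `λ² - λ + 1 ≠ 0`, for `x₁, x₂` the roots of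
`f'` and any square roots `a, b` of the critical values `f(x₁), f(x₂)`, the four
singular points `a, -a, b, -b` are pairwise distinct. -/
theorem legendre_four_distinct_singular_points (lam x₁ x₂ a b : ℂ)
    (hlam0 : lam ≠ 0) (hlam1 : lam ≠ 1) (hgen : lam ^ 2 - lam + 1 ≠ 0)
    (f : ℂ → ℂ) (hf : ∀ x : ℂ, f x = x * (x - 1) * (x - lam))
    (hsum : x₁ + x₂ = 2 * (lam + 1) / 3) (hprod : x₁ * x₂ = lam / 3)
    (ha : a ^ 2 = f x₁) (hb : b ^ 2 = f x₂) :
    List.Pairwise (· ≠ ·) [a, -a, b, -b] := by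
  -- product of critical values
  have hprodval : a ^ 2 * b ^ 2 = -(lam ^ 2 * (lam - 1) ^ 2) / 27 := by
    have key : f x₁ * f x₂ =
        (x₁ * x₂) * ((x₁ * x₂) - (x₁ + x₂) + 1) *
          ((x₁ * x₂) - lam * (x₁ + x₂) + lam ^ 2) := by
      rw [hf, hf]; ring
    rw [ha, hb, key, hsum, hprod]; ring
  have hab0 : a ^ 2 * b ^ 2 ≠ 0 := by
    rw [hprodval]
    intro h
    have h27 : (27 : ℂ) ≠ 0 := by norm_num
    have := (div_eq_zero_iff.mp h).resolve_right h27
    have := neg_eq_zero.mp this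
    rcases mul_eq_zero.mp this with h1 | h2
    · exact hlam0 ((pow_eq_zero_iff (two_ne_zero)).mp h1)
    · exact hlam1 (sub_eq_zero.mp ((pow_eq_zero_iff (two_ne_zero)).mp h2))
  have ha0 : a ≠ 0 := by
    intro h; apply hab0; rw [h]; ring
  have hb0 : b ≠ 0 := by
    intro h; apply hab0; rw [h]; ring
  -- difference of critical values squared
  have hdiff : (a ^ 2 - b ^ 2) ^ 2 = 16 / 729 * (lam ^ 2 - lam + 1) ^ 3 := by
    have key : (f x₁ - f x₂) ^ 2 =
        ((x₁ + x₂) ^ 2 - 4 * (x₁ * x₂)) *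
          ((x₁ + x₂) ^ 2 - (x₁ * x₂) - (lam + 1) * (x₁ + x₂) + lam) ^ 2 := by
      rw [hf, hf]; ring
    rw [ha, hb, key, hsum, hprod]; ring
  have hsqne : a ^ 2 ≠ b ^ 2 := by
    intro h
    have h0 : (16 : ℂ) / 729 * (lam ^ 2 - lam + 1) ^ 3 = 0 := by
      rw [← hdiff, h]; ring
    rcases mul_eq_zero.mp h0 with h1 | h2
    · norm_num at h1
    · exact hgen ((pow_eq_zero_iff (three_ne_zero)).mp h2)
  have hab : a ≠ b := fun h => hsqne (by rw [h])
  have hanb : a ≠ -b := fun h => hsqne (by rw [h]; ring)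
  have hnab : -a ≠ b := fun h => hsqne (by rw [← h]; ring)
  have hnanb : -a ≠ -b := fun h => hsqne (by rw [neg_inj.mp h])
  have hana : a ≠ -a := fun h => ha0 (by linear_combination h / 2)
  have hbnb : b ≠ -b := fun h => hb0 (by linear_combination h / 2)
  refine .cons ?_ (.cons ?_ (.cons ?_ (.cons (by simp) .nil)))
  · rintro x hx; fin_cases hx
    exacts [hana, hab, hanb]
  · rintro x hx; fin_cases hx
    exacts [hnab, hnanb]
  · rintro x hx; fin_cases hx
    exact hbnb
end

section
/- Let a, b, x₁, x₂, x₃, x₄ ∈ ℂ. Let M₁ be the 2×4 complex matrix with rows (1, a, a², a³) and (1, −a, a², −a³), and M₂ the 2×4 matrix with rows (1, b, b², b³) and (1, −b, b², −b³). Let Q be the 8×8 matrix whose block rows are (M₁ | x₁M₁), (M₂ | x₂M₂), (M₁ | x₃M₁), (M₂ | x₄M₂). Then det Q = (x₃ − x₁)²·(x₄ − x₂)²·Δ², where Δ = 4ab(a² − b²)² is the determinant of the 4×4 matrix formed by stacking M₁ on M₂ (the Vandermonde determinant of (a, −a, b, −b)). -/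
open Matrix

lemma det_fromBlocks_row_rep {n : Type*} [DecidableEq n] [Fintype n]
    (A B D : Matrix n n ℂ) :
    (fromBlocks A B A D).det = A.det * (D - B).det := by
  have h : fromBlocks A B A D =
      fromBlocks 1 0 1 1 * fromBlocks A B 0 (D - B) := by
    simp [Matrix.fromBlocks_multiply]
  rw [h, Matrix.det_mul, Matrix.det_fromBlocks_zero₁₂,
    Matrix.det_fromBlocks_zero₂₁]
  simp

lemma fv0 {α : Type*} (a0 a1 a2 a3 a4 a5 a6 a7 : α) :
    ![a0,a1,a2,a3,a4,a5,a6,a7] (0 : Fin 8) = a0 := rfl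
lemma fv1 {α : Type*} (a0 a1 a2 a3 a4 a5 a6 a7 : α) :
    ![a0,a1,a2,a3,a4,a5,a6,a7] (1 : Fin 8) = a1 := rfl
lemma fv2 {α : Type*} (a0 a1 a2 a3 a4 a5 a6 a7 : α) :
    ![a0,a1,a2,a3,a4,a5,a6,a7] (2 : Fin 8) = a2 := rfl
lemma fv3 {α : Type*} (a0 a1 a2 a3 a4 a5 a6 a7 : α) :
    ![a0,a1,a2,a3,a4,a5,a6,a7] (3 : Fin 8) = a3 := rfl
lemma fv4 {α : Type*} (a0 a1 a2 a3 a4 a5 a6 a7 : α) :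
    ![a0,a1,a2,a3,a4,a5,a6,a7] (4 : Fin 8) = a4 := rfl
lemma fv5 {α : Type*} (a0 a1 a2 a3 a4 a5 a6 a7 : α) :
    ![a0,a1,a2,a3,a4,a5,a6,a7] (5 : Fin 8) = a5 := rfl
lemma fv6 {α : Type*} (a0 a1 a2 a3 a4 a5 a6 a7 : α) :
    ![a0,a1,a2,a3,a4,a5,a6,a7] (6 : Fin 8) = a6 := rfl
lemma fv7 {α : Type*} (a0 a1 a2 a3 a4 a5 a6 a7 : α) :
    ![a0,a1,a2,a3,a4,a5,a6,a7] (7 : Fin 8) = a7 := rfl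
lemma gv0 {α : Type*} (a0 a1 a2 a3 : α) : ![a0,a1,a2,a3] (0 : Fin 4) = a0 := rfl
lemma gv1 {α : Type*} (a0 a1 a2 a3 : α) : ![a0,a1,a2,a3] (1 : Fin 4) = a1 := rfl
lemma gv2 {α : Type*} (a0 a1 a2 a3 : α) : ![a0,a1,a2,a3] (2 : Fin 4) = a2 := rfl
lemma gv3 {α : Type*} (a0 a1 a2 a3 : α) : ![a0,a1,a2,a3] (3 : Fin 4) = a3 := rfl

set_option maxHeartbeats 2000000 in

/-- The 8×8 period matrix `Q` built from the block rows `(M₁ | x₁M₁)`, `(M₂ | x₂M₂)`,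
`(M₁ | x₃M₁)`, `(M₂ | x₄M₂)`, where `M₁` has rows `(1, a, a², a³)`, `(1, -a, a², -a³)`
and `M₂` has rows `(1, b, b², b³)`, `(1, -b, b², -b³)`, has determinant
`(x₃-x₁)²(x₄-x₂)²Δ²`, where `Δ = 4ab(a²-b²)²` is the Vandermonde determinant of
`(a, -a, b, -b)`. -/
theorem period_matrix_det_block (a b x₁ x₂ x₃ x₄ : ℂ) :
    (Matrix.det
      !![1,  a, a^2,  a^3, x₁,  x₁*a, x₁*a^2,  x₁*a^3;
         1, -a, a^2, -a^3, x₁, -x₁*a, x₁*a^2, -x₁*a^3;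
         1,  b, b^2,  b^3, x₂,  x₂*b, x₂*b^2,  x₂*b^3;
         1, -b, b^2, -b^3, x₂, -x₂*b, x₂*b^2, -x₂*b^3;
         1,  a, a^2,  a^3, x₃,  x₃*a, x₃*a^2,  x₃*a^3;
         1, -a, a^2, -a^3, x₃, -x₃*a, x₃*a^2, -x₃*a^3;
         1,  b, b^2,  b^3, x₄,  x₄*b, x₄*b^2,  x₄*b^3;
         1, -b, b^2, -b^3, x₄, -x₄*b, x₄*b^2, -x₄*b^3]) =
    (x₃ - x₁) ^ 2 * (x₄ - x₂) ^ 2 * (4 * a * b * (a ^ 2 - b ^ 2) ^ 2) ^ 2 := by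
  set M : Matrix (Fin 4) (Fin 4) ℂ :=
    !![1,  a, a^2,  a^3;
       1, -a, a^2, -a^3;
       1,  b, b^2,  b^3;
       1, -b, b^2, -b^3] with hM
  set B : Matrix (Fin 4) (Fin 4) ℂ :=
    !![x₁,  x₁*a, x₁*a^2,  x₁*a^3;
       x₁, -x₁*a, x₁*a^2, -x₁*a^3;
       x₂,  x₂*b, x₂*b^2,  x₂*b^3;
       x₂, -x₂*b, x₂*b^2, -x₂*b^3] with hB
  set C : Matrix (Fin 4) (Fin 4) ℂ :=
    !![x₃,  x₃*a, x₃*a^2,  x₃*a^3;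
       x₃, -x₃*a, x₃*a^2, -x₃*a^3;
       x₄,  x₄*b, x₄*b^2,  x₄*b^3;
       x₄, -x₄*b, x₄*b^2, -x₄*b^3] with hC
  have hQ : (!![1,  a, a^2,  a^3, x₁,  x₁*a, x₁*a^2,  x₁*a^3;
         1, -a, a^2, -a^3, x₁, -x₁*a, x₁*a^2, -x₁*a^3;
         1,  b, b^2,  b^3, x₂,  x₂*b, x₂*b^2,  x₂*b^3;
         1, -b, b^2, -b^3, x₂, -x₂*b, x₂*b^2, -x₂*b^3;
         1,  a, a^2,  a^3, x₃,  x₃*a, x₃*a^2,  x₃*a^3;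
         1, -a, a^2, -a^3, x₃, -x₃*a, x₃*a^2, -x₃*a^3;
         1,  b, b^2,  b^3, x₄,  x₄*b, x₄*b^2,  x₄*b^3;
         1, -b, b^2, -b^3, x₄, -x₄*b, x₄*b^2, -x₄*b^3] : Matrix (Fin 8) (Fin 8) ℂ) =
      Matrix.reindex finSumFinEquiv finSumFinEquiv (fromBlocks M B M C) := by
    have e0 : finSumFinEquiv.symm (0 : Fin 8) = (Sum.inl 0 : Fin 4 ⊕ Fin 4) := by decide
    have e1 : finSumFinEquiv.symm (1 : Fin 8) = (Sum.inl 1 : Fin 4 ⊕ Fin 4) := by decide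
    have e2 : finSumFinEquiv.symm (2 : Fin 8) = (Sum.inl 2 : Fin 4 ⊕ Fin 4) := by decide
    have e3 : finSumFinEquiv.symm (3 : Fin 8) = (Sum.inl 3 : Fin 4 ⊕ Fin 4) := by decide
    have e4 : finSumFinEquiv.symm (4 : Fin 8) = (Sum.inr 0 : Fin 4 ⊕ Fin 4) := by decide
    have e5 : finSumFinEquiv.symm (5 : Fin 8) = (Sum.inr 1 : Fin 4 ⊕ Fin 4) := by decide
    have e6 : finSumFinEquiv.symm (6 : Fin 8) = (Sum.inr 2 : Fin 4 ⊕ Fin 4) := by decide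
    have e7 : finSumFinEquiv.symm (7 : Fin 8) = (Sum.inr 3 : Fin 4 ⊕ Fin 4) := by decide
    ext i j
    fin_cases i <;> fin_cases j <;>
      simp [e0, e1, e2, e3, e4, e5, e6, e7, hM, hB, hC,
        fv0, fv1, fv2, fv3, fv4, fv5, fv6, fv7, gv0, gv1, gv2, gv3] <;> rfl
  rw [hQ, Matrix.det_reindex_self, det_fromBlocks_row_rep]
  have hCB : C - B = Matrix.diagonal ![x₃ - x₁, x₃ - x₁, x₄ - x₂, x₄ - x₂] * M := by
    ext i j
    fin_cases i <;> fin_cases j <;>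
      simp [hM, hB, hC, Matrix.mul_apply, Fin.sum_univ_four,
        gv0, gv1, gv2, gv3, Matrix.vecHead, Matrix.vecTail] <;> ring
  rw [hCB, Matrix.det_mul, Matrix.det_diagonal]
  have hdM : M.det = 4 * a * b * (a ^ 2 - b ^ 2) ^ 2 := by
    rw [hM, show (!![1,  a, a^2,  a^3;
       1, -a, a^2, -a^3;
       1,  b, b^2,  b^3;
       1, -b, b^2, -b^3] : Matrix (Fin 4) (Fin 4) ℂ) = Matrix.vandermonde ![a, -a, b, -b] by
      ext i j
      fin_cases i <;> fin_cases j <;>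
        norm_num [Matrix.vandermonde, Matrix.vecHead, Matrix.vecTail] <;> ring]
    rw [Matrix.det_vandermonde, Fin.prod_univ_four]
    rw [show (Finset.Ioi (0:Fin 4)) = {1,2,3} from by decide]
    rw [show (Finset.Ioi (1:Fin 4)) = {2,3} from by decide]
    rw [show (Finset.Ioi (2:Fin 4)) = {3} from by decide]
    rw [show (Finset.Ioi (3:Fin 4)) = {} from by decide]
    simp [Matrix.vecHead, Matrix.vecTail]
    ring
  rw [hdM]
  simp [Fin.prod_univ_four]
  ring
end

section
/- Let n ≥ 2 and let λ₁, …, λₙ ∈ ℂ be pairwise distinct. Define, for 1 ≤ i ≤ n−1, the rational functions η_i(x) = x^{i−1} / ∏_{k=1}^n (x − λ_k) and ω_i(x) = 1/(x − λ_i) − 1/(x − λ_{i+1}). Then there exists an (n−1)×(n−1) complex matrix C such that η_i(x) = Σ_{j=1}^{n−1} C_{ij}·ω_j(x) for every x ∈ ℂ with x ≠ λ_k for all k, and det C = 1 / ∏_{1 ≤ i < j ≤ n} (λ_i − λ_j). -/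
/-!
Let `w_k = ∏_{l ≠ k} (λ_k - λ_l)⁻¹` be the Lagrange nodal weights of `λ₀, …, λₙ`. Partial
fractions give `x^i / ∏_k (x - λ_k) = ∑_k w_k λ_k^i / (x - λ_k)`, and for `i < n` the sum
`∑_k w_k λ_k^i` vanishes, being the coefficient of `X^n` in the interpolant of `X^i`. Summation by
parts against the last node then writes `η_i` in the `ω_j` with `C = Vᵀ · diag(w₀, …, w_{n-1}) · U`,
where `V` is the Vandermonde matrix of `λ₀, …, λ_{n-1}` and `U` the upper triangular matrix of
ones. Hence `det C = det V · ∏_{k<n} w_k`, and `∏_{k<n} ∏_{l ≠ k} (λ_k - λ_l) = Δ(λ) · det V`.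
-/

open Finset Matrix

namespace Fin

variable {M : Type*} {n : ℕ}

theorem prod_erase_castSucc [CommMonoid M] (f : Fin (n + 1) → M) (k : Fin n) :
    ∏ l ∈ univ.erase k.castSucc, f l = (∏ l ∈ univ.erase k, f l.castSucc) * f (last n) := by
  simp only [← filter_ne', prod_filter, prod_univ_castSucc, ne_eq, castSucc_inj,
    if_pos (castSucc_lt_last k).ne']

theorem prod_Ioi_castSucc [CommMonoid M] (f : Fin (n + 1) → M) (k : Fin n) :
    ∏ j ∈ Ioi k.castSucc, f j = (∏ j ∈ Ioi k, f j.castSucc) * f (last n) := by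
  simp only [← filter_lt_eq_Ioi, prod_filter, prod_univ_castSucc, castSucc_lt_castSucc_iff,
    if_pos (castSucc_lt_last k)]

theorem prod_prod_Ioi_castSucc [CommMonoid M] (f : Fin (n + 1) → Fin (n + 1) → M) :
    ∏ i, ∏ j ∈ Ioi i, f i j =
      (∏ i : Fin n, ∏ j ∈ Ioi i, f i.castSucc j.castSucc) * ∏ i : Fin n, f i.castSucc (last n) := by
  rw [prod_univ_castSucc, Ioi_eq_empty.mpr fun j _ ↦ le_last j, prod_empty, mul_one,
    ← prod_mul_distrib]
  exact prod_congr rfl fun i _ ↦ prod_Ioi_castSucc _ i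

theorem sum_Ici_castSucc_sub_succ [AddCommGroup M] (g : Fin (n + 1) → M) (k : Fin n) :
    ∑ j ∈ Ici k, (g j.castSucc - g j.succ) = g k.castSucc - g (last n) := by
  cases n with
  | zero => exact k.elim0
  | succ m =>
    rw [← neg_sub, ← succ_last, ← sum_Icc_sub (le_last k), ← sum_neg_distrib, Ici_eq_Icc,
      top_eq_last]
    simp only [neg_sub]

theorem sum_castSucc_mul_sub_last [CommRing M] {A : Fin (n + 1) → M} (hA : ∑ k, A k = 0)
    (g : Fin (n + 1) → M) :
    ∑ k : Fin n, A k.castSucc * (g k.castSucc - g (last n)) = ∑ k, A k * g k := by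
  rw [sum_univ_castSucc] at hA ⊢
  simp only [mul_sub, sum_sub_distrib, ← sum_mul, eq_neg_of_add_eq_zero_left hA]
  ring

end Fin

namespace Lagrange

open Polynomial

variable {F ι : Type*} [Field F] [DecidableEq ι] {s : Finset ι} {v : ι → F}

theorem sum_nodalWeight_mul_pow_eq_zero (hvs : Set.InjOn v s) {i : ℕ} (hi : i + 1 < #s) :
    ∑ k ∈ s, nodalWeight s v k * v k ^ i = 0 := by
  have h := coeff_eq_sum hvs (P := X ^ i) <| by
    rw [degree_X_pow]; exact_mod_cast hi.trans' i.lt_succ_self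
  rw [coeff_X_pow, if_neg (by omega)] at h
  simpa [nodalWeight, prod_inv_distrib, div_eq_inv_mul] using h.symm

theorem pow_div_prod_sub_eq_sum_nodalWeight (hvs : Set.InjOn v s) {i : ℕ} (hi : i < #s) {x : F}
    (hx : ∀ k ∈ s, x ≠ v k) :
    x ^ i / ∏ k ∈ s, (x - v k) = ∑ k ∈ s, nodalWeight s v k * v k ^ i * (x - v k)⁻¹ := by
  have h := congrArg (eval x) <| eq_interpolate hvs (f := X ^ i) <| by
    rw [degree_X_pow]; exact_mod_cast hi
  simp only [eval_interpolate_not_at_node _ hx, eval_nodal, eval_pow, eval_X] at h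
  have hne : ∏ k ∈ s, (x - v k) ≠ 0 := prod_ne_zero_iff.mpr fun k hk ↦ sub_ne_zero.mpr (hx k hk)
  rw [div_eq_iff hne, h, mul_comm]
  exact congrArg (· * _) (sum_congr rfl fun k _ ↦ mul_right_comm _ _ _)

end Lagrange

theorem prod_prod_erase_sub_eq_mul_det_vandermonde {R : Type*} [CommRing R] {n : ℕ}
    (u : Fin n → R) :
    ∏ i, ∏ j ∈ univ.erase i, (u i - u j) =
      (∏ i, ∏ j ∈ Ioi i, (u i - u j)) * (vandermonde u).det := by
  rw [det_vandermonde, ← prod_mul_distrib]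
  simp_rw [← prod_mul_distrib, ← compl_singleton]
  exact (prod_prod_Ioi_mul_eq_prod_prod_off_diag fun j i ↦ u i - u j).symm

theorem prod_prod_erase_castSucc_sub_eq_mul_det_vandermonde {R : Type*} [CommRing R] {n : ℕ}
    (lam : Fin (n + 1) → R) :
    ∏ k : Fin n, ∏ l ∈ univ.erase k.castSucc, (lam k.castSucc - lam l) =
      (∏ i, ∏ j ∈ Ioi i, (lam i - lam j)) * (vandermonde (lam ∘ Fin.castSucc)).det := by
  simp only [Fin.prod_erase_castSucc, prod_mul_distrib, Fin.prod_prod_Ioi_castSucc]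
  rw [prod_prod_erase_sub_eq_mul_det_vandermonde, Function.comp_def]
  ring

def upperTriangularOnes (R : Type*) [Zero R] [One R] (n : ℕ) : Matrix (Fin n) (Fin n) R :=
  of fun k j ↦ if k ≤ j then 1 else 0

theorem det_upperTriangularOnes (R : Type*) [CommRing R] (n : ℕ) :
    (upperTriangularOnes R n).det = 1 := by
  have : (upperTriangularOnes R n).IsUpperTriangular := fun k j (h : j < k) ↦ if_neg h.not_ge
  rw [det_of_isUpperTriangular this]
  exact prod_eq_one fun k _ ↦ if_pos le_rfl

theorem upperTriangularOnes_mulVec_castSucc_sub_succ {R : Type*} [CommRing R] {n : ℕ}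
    (g : Fin (n + 1) → R) :
    upperTriangularOnes R n *ᵥ (fun j ↦ g j.castSucc - g j.succ) =
      fun k ↦ g k.castSucc - g (Fin.last n) := by
  ext k
  simp only [upperTriangularOnes, mulVec, dotProduct, of_apply, ite_mul, one_mul, zero_mul,
    ← sum_filter, filter_le_eq_Ici]
  exact Fin.sum_Ici_castSucc_sub_succ g k

section ChangeOfBasis

open Lagrange

variable {K : Type*} [Field K] {n : ℕ}

def etaOmegaMatrix (lam : Fin (n + 1) → K) : Matrix (Fin n) (Fin n) K :=
  (vandermonde (lam ∘ Fin.castSucc))ᵀ * diagonal (fun k ↦ nodalWeight univ lam k.castSucc) *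
    upperTriangularOnes K n

theorem etaOmegaMatrix_mulVec {lam : Fin (n + 1) → K} (hlam : Function.Injective lam)
    (i : Fin n) {x : K} (hx : ∀ k, x ≠ lam k) :
    (etaOmegaMatrix lam *ᵥ fun j ↦ (x - lam j.castSucc)⁻¹ - (x - lam j.succ)⁻¹) i =
      x ^ (i : ℕ) / ∏ k, (x - lam k) := by
  have hi : (i : ℕ) + 1 < #(univ : Finset (Fin (n + 1))) := by simp
  have hA := sum_nodalWeight_mul_pow_eq_zero hlam.injOn hi
  rw [etaOmegaMatrix, ← mulVec_mulVec, ← mulVec_mulVec,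
    upperTriangularOnes_mulVec_castSucc_sub_succ fun k ↦ (x - lam k)⁻¹,
    pow_div_prod_sub_eq_sum_nodalWeight hlam.injOn (by omega) fun k _ ↦ hx k]
  rw [← Fin.sum_castSucc_mul_sub_last hA fun k ↦ (x - lam k)⁻¹, mulVec, dotProduct]
  refine sum_congr rfl fun k _ ↦ ?_
  rw [mulVec_diagonal, transpose_apply, vandermonde_apply, Function.comp_apply]
  ring

theorem det_etaOmegaMatrix {lam : Fin (n + 1) → K} (hlam : Function.Injective lam) :
    (etaOmegaMatrix lam).det = (∏ i, ∏ j ∈ Ioi i, (lam i - lam j))⁻¹ := by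
  have hV : (vandermonde (lam ∘ Fin.castSucc)).det ≠ 0 :=
    det_vandermonde_ne_zero_iff.mpr (hlam.comp (Fin.castSucc_injective n))
  rw [etaOmegaMatrix, det_mul, det_mul, det_transpose, det_diagonal, det_upperTriangularOnes,
    mul_one]
  simp only [nodalWeight, prod_inv_distrib, prod_prod_erase_castSucc_sub_eq_mul_det_vandermonde,
    _root_.mul_inv_rev]
  exact mul_inv_cancel_left₀ hV _

end ChangeOfBasis

open Finset in
theorem eta_omega_change_of_basis_general (n : ℕ) (lam : Fin (n + 1) → ℂ)
    (hlam : Function.Injective lam) :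
    ∃ C : Matrix (Fin n) (Fin n) ℂ,
      (∀ i : Fin n, ∀ x : ℂ, (∀ k : Fin (n + 1), x ≠ lam k) →
        x ^ (i : ℕ) / (∏ k : Fin (n + 1), (x - lam k)) =
          ∑ j : Fin n, C i j *
            (1 / (x - lam j.castSucc) - 1 / (x - lam j.succ))) ∧
      C.det = 1 / ∏ i : Fin (n + 1), ∏ j ∈ Finset.Ioi i, (lam i - lam j) := by
  refine ⟨etaOmegaMatrix lam, fun i x hx ↦ ?_, by rw [det_etaOmegaMatrix hlam, one_div]⟩
  simpa only [one_div, mulVec, dotProduct] using (etaOmegaMatrix_mulVec hlam i hx).symm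

open Finset in
/-- Change of basis between `η_i(x) = x^{i-1}/∏_k (x - λ_k)` and
`ω_i(x) = 1/(x - λ_i) - 1/(x - λ_{i+1})` for `n + 1 ≥ 2` pairwise distinct points
`λ₀, …, λₙ`: there is a matrix `C` expressing the `η`'s in terms of the `ω`'s away
from the poles, with `det C = 1/∏_{i<j}(λ_i - λ_j)`. -/
theorem eta_omega_change_of_basis (n : ℕ) (hn : 1 ≤ n) (lam : Fin (n + 1) → ℂ)
    (hlam : Function.Injective lam) :
    ∃ C : Matrix (Fin n) (Fin n) ℂ,
      (∀ i : Fin n, ∀ x : ℂ, (∀ k : Fin (n + 1), x ≠ lam k) →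
        x ^ (i : ℕ) / (∏ k : Fin (n + 1), (x - lam k)) =
          ∑ j : Fin n, C i j *
            (1 / (x - lam j.castSucc) - 1 / (x - lam j.succ))) ∧
      C.det = 1 / ∏ i : Fin (n + 1), ∏ j ∈ Finset.Ioi i, (lam i - lam j) :=
  eta_omega_change_of_basis_general n lam hlam
end

section
/- Let a, b ∈ ℂ with ab ≠ 0 and a² ≠ b², and let P = 4π²·a³b³/(a² − b²)³. Define for m ∈ ℕ (m large) the sequence P_m = P · [(1/m)^{8m}·(m² − a²)^{2m}·(m² − b²)^{2m}] · [m^{−10}·(m² − a²)^{5/2}·(m² − b²)^{5/2}] · [m^{10}·Γ(m+1)²/(Γ(m+1+14/3)·Γ(m+1+16/3))], where the exponents 2m and 8m are integer powers, the exponent 5/2 is the principal-branch complex power, and Γ is the Euler Gamma function. Then P_m converges to P = 4π²·a³b³/(a² − b²)³ as m → ∞. -/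
/-!
Each of the three correction factors tends to `1`. For the integer powers,
`(m² - c)^m / m^(2m) = (1 - c/m²)^m → exp 0` because `m · c/m² → 0`. For the
half-integer powers, `m²` is a positive real, so the principal logarithm splits and
`(m² - c)^(5/2) / m⁵ = (1 - c/m²)^(5/2)`, which tends to `1` by continuity of `cpow` at `1`.
For the Gamma factor, `Γ(n + 1 + s) = Γ(s) s (s + 1) ⋯ (s + n)`, so the ratio
`Γ(n + 1 + s) / (n! nˢ)` is `Γ(s)` divided by Euler's sequence `GammaSeq s n`, and Euler's
limit formula gives `1`; the exponents `14/3 + 16/3 = 10` match.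
-/

open Filter Topology

namespace Real

theorem Gamma_add_nat_eq_mul_prod {s : ℝ} (hs : ∀ m : ℕ, s ≠ -m) (n : ℕ) :
    Gamma (s + n) = Gamma s * ∏ j ∈ Finset.range n, (s + j) := by
  induction n with
  | zero => simp
  | succ n ih =>
    have hsn : s + n ≠ 0 := fun h => hs n (eq_neg_of_add_eq_zero_left h)
    rw [Nat.cast_succ, ← add_assoc, Gamma_add_one hsn, ih, Finset.prod_range_succ]
    ring

theorem tendsto_Gamma_nat_add_div_Gamma_mul_rpow {s : ℝ} (hs : ∀ m : ℕ, s ≠ -m) :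
    Tendsto (fun n : ℕ => Gamma (n + 1 + s) / (Gamma (n + 1) * (n : ℝ) ^ s)) atTop (𝓝 1) := by
  have h := (tendsto_const_nhds (x := Gamma s)).div (GammaSeq_tendsto_Gamma s) (Gamma_ne_zero hs)
  rw [div_self (Gamma_ne_zero hs)] at h
  refine h.congr fun n => ?_
  show Gamma s / GammaSeq s n = _
  rw [GammaSeq, Gamma_nat_eq_factorial, add_comm _ s, ← Nat.cast_succ,
    Gamma_add_nat_eq_mul_prod hs, div_div_eq_mul_div, mul_comm ((n : ℝ) ^ s)]

theorem tendsto_rpow_add_mul_Gamma_sq_div_Gamma_mul_Gamma {s t : ℝ} (hs : ∀ m : ℕ, s ≠ -m)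
    (ht : ∀ m : ℕ, t ≠ -m) :
    Tendsto (fun n : ℕ => (n : ℝ) ^ (s + t) * Gamma (n + 1) ^ 2 /
      (Gamma (n + 1 + s) * Gamma (n + 1 + t))) atTop (𝓝 1) := by
  have h := ((tendsto_Gamma_nat_add_div_Gamma_mul_rpow hs).mul
    (tendsto_Gamma_nat_add_div_Gamma_mul_rpow ht)).inv₀ (by norm_num)
  rw [mul_one, inv_one] at h
  refine h.congr' ?_
  filter_upwards [eventually_gt_atTop 0] with n hn
  rw [rpow_add (Nat.cast_pos.2 hn), div_mul_div_comm, inv_div]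
  ring

end Real

namespace Complex

theorem tendsto_one_sub_div_sq_pow (c : ℂ) :
    Tendsto (fun n : ℕ => (1 - c / (n : ℂ) ^ 2) ^ n) atTop (𝓝 1) := by
  have h : Tendsto (fun n : ℕ => (n : ℂ) * -(c / (n : ℂ) ^ 2)) atTop (𝓝 0) := by
    have := (tendsto_inv_atTop_zero.comp tendsto_natCast_atTop_atTop).ofReal.const_mul (-c)
    rw [ofReal_zero, mul_zero] at this
    refine this.congr' ?_
    filter_upwards [eventually_ne_atTop 0] with n hn
    have : (n : ℂ) ≠ 0 := Nat.cast_ne_zero.2 hn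
    simp only [Function.comp_apply, ofReal_inv, ofReal_natCast]
    field_simp
  simpa [← sub_eq_add_neg] using tendsto_one_add_pow_exp_of_tendsto h

theorem tendsto_natCast_sq_sub_pow_div_pow (c : ℂ) :
    Tendsto (fun n : ℕ => ((n : ℂ) ^ 2 - c) ^ n / (n : ℂ) ^ (2 * n)) atTop (𝓝 1) := by
  refine (tendsto_one_sub_div_sq_pow c).congr' ?_
  filter_upwards [eventually_ne_atTop 0] with n hn
  have : (n : ℂ) ≠ 0 := Nat.cast_ne_zero.2 hn
  rw [pow_mul, ← div_pow, sub_div, div_self (pow_ne_zero 2 this)]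

theorem ofReal_mul_cpow {r : ℝ} (hr : 0 < r) (z s : ℂ) :
    ((r : ℂ) * z) ^ s = (r : ℂ) ^ s * z ^ s := by
  have hr' : (r : ℂ) ≠ 0 := ofReal_ne_zero.2 hr.ne'
  rcases eq_or_ne z 0 with rfl | hz
  · rcases eq_or_ne s 0 with rfl | hs <;> simp [*]
  · rw [cpow_def_of_ne_zero (mul_ne_zero hr' hz), log_ofReal_mul hr hz, cpow_def_of_ne_zero hr',
      cpow_def_of_ne_zero hz, ← exp_add, ofReal_log hr.le, add_mul]

theorem tendsto_ofReal_sub_cpow_div_cpow (c s : ℂ) :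
    Tendsto (fun x : ℝ => ((x : ℂ) - c) ^ s / (x : ℂ) ^ s) atTop (𝓝 1) := by
  have h1 : Tendsto (fun x : ℝ => 1 - c * ((x⁻¹ : ℝ) : ℂ)) atTop (𝓝 1) := by
    simpa using (tendsto_inv_atTop_zero.ofReal.const_mul c).const_sub 1
  have h := (continuousAt_cpow_const (b := s) one_mem_slitPlane).tendsto.comp h1
  rw [one_cpow] at h
  refine h.congr' ?_
  filter_upwards [eventually_gt_atTop 0] with x hx
  have hx' : (x : ℂ) ≠ 0 := ofReal_ne_zero.2 hx.ne'
  have hsplit : (x : ℂ) - c = x * (1 - c * ((x⁻¹ : ℝ) : ℂ)) := by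
    push_cast
    field_simp
  rw [Function.comp_apply, hsplit, ofReal_mul_cpow hx,
    mul_div_cancel_left₀ _ (cpow_ne_zero_iff.2 (Or.inl hx'))]

theorem ofReal_sq_cpow_natCast_div_two {x : ℝ} (hx : 0 ≤ x) (n : ℕ) :
    ((x : ℂ) ^ 2) ^ ((n : ℂ) / 2) = (x : ℂ) ^ n := by
  have hn : (n : ℂ) / 2 = ((n / 2 : ℝ) : ℂ) := by push_cast; rfl
  rw [hn, ← ofReal_pow, ← ofReal_cpow (by positivity), ← Real.rpow_natCast x 2,
    ← Real.rpow_mul hx, Nat.cast_two, mul_div_cancel₀ _ two_ne_zero, Real.rpow_natCast,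
    ofReal_pow]

theorem tendsto_natCast_sq_sub_cpow_div_pow (c : ℂ) (n : ℕ) :
    Tendsto (fun m : ℕ => ((m : ℂ) ^ 2 - c) ^ ((n : ℂ) / 2) / (m : ℂ) ^ n) atTop (𝓝 1) := by
  have h := (tendsto_ofReal_sub_cpow_div_cpow c ((n : ℂ) / 2)).comp
    ((tendsto_pow_atTop two_ne_zero).comp tendsto_natCast_atTop_atTop)
  refine h.congr fun m => ?_
  simp only [Function.comp_apply, ofReal_pow, ofReal_natCast]
  rw [← ofReal_natCast, ofReal_sq_cpow_natCast_div_two m.cast_nonneg]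

end Complex

open Filter in
theorem tendsto_period_determinant_approximation_general (a b : ℂ) :
    Tendsto (fun m : ℕ =>
        (4 * (Real.pi : ℂ) ^ 2 * a ^ 3 * b ^ 3 / (a ^ 2 - b ^ 2) ^ 3) *
          ((1 / (m : ℂ)) ^ (8 * m) * ((m : ℂ) ^ 2 - a ^ 2) ^ (2 * m) *
            ((m : ℂ) ^ 2 - b ^ 2) ^ (2 * m)) *
          (((m : ℂ) ^ 2 - a ^ 2) ^ ((5 : ℂ) / 2) *
            ((m : ℂ) ^ 2 - b ^ 2) ^ ((5 : ℂ) / 2) / (m : ℂ) ^ (10 : ℕ)) *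
          (((m : ℝ) ^ 10 * Real.Gamma (m + 1) ^ 2 /
            (Real.Gamma (m + 1 + 14 / 3) * Real.Gamma (m + 1 + 16 / 3)) : ℝ) : ℂ))
      atTop (nhds (4 * (Real.pi : ℂ) ^ 2 * a ^ 3 * b ^ 3 / (a ^ 2 - b ^ 2) ^ 3)) := by
  have hpow := ((Complex.tendsto_natCast_sq_sub_pow_div_pow (a ^ 2)).pow 2).mul
    ((Complex.tendsto_natCast_sq_sub_pow_div_pow (b ^ 2)).pow 2)
  have hcpow := (Complex.tendsto_natCast_sq_sub_cpow_div_pow (a ^ 2) 5).mul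
    (Complex.tendsto_natCast_sq_sub_cpow_div_pow (b ^ 2) 5)
  have hGamma := (Real.tendsto_rpow_add_mul_Gamma_sq_div_Gamma_mul_Gamma (s := 14 / 3)
    (t := 16 / 3) (fun m => ne_of_gt (by linarith [m.cast_nonneg (α := ℝ)]))
    (fun m => ne_of_gt (by linarith [m.cast_nonneg (α := ℝ)]))).ofReal
  have hprod := ((tendsto_const_nhds
    (x := 4 * (Real.pi : ℂ) ^ 2 * a ^ 3 * b ^ 3 / (a ^ 2 - b ^ 2) ^ 3)).mul hpow |>.mul hcpow).mul
    hGamma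
  rw [one_pow, Complex.ofReal_one, mul_one, mul_one, mul_one, mul_one] at hprod
  refine hprod.congr fun m => ?_
  have h10 : (m : ℝ) ^ (14 / 3 + 16 / 3 : ℝ) = (m : ℝ) ^ 10 := by
    rw [show (14 / 3 + 16 / 3 : ℝ) = (10 : ℕ) by norm_num, Real.rpow_natCast]
  simp only [h10, Nat.cast_ofNat]
  ring

open Filter in
/-- Convergence of the period determinants `P_m` of the regular singular approximations
`∇₍ₘ₎` to the period determinant `P = 4π²a³b³/(a²-b²)³` of the irregular rank-2
connection, where `a, b` are square roots of the critical values. -/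
theorem tendsto_period_determinant_approximation (a b : ℂ)
    (hab : a * b ≠ 0) (hsq : a ^ 2 ≠ b ^ 2) :
    Tendsto (fun m : ℕ =>
        (4 * (Real.pi : ℂ) ^ 2 * a ^ 3 * b ^ 3 / (a ^ 2 - b ^ 2) ^ 3) *
          ((1 / (m : ℂ)) ^ (8 * m) * ((m : ℂ) ^ 2 - a ^ 2) ^ (2 * m) *
            ((m : ℂ) ^ 2 - b ^ 2) ^ (2 * m)) *
          (((m : ℂ) ^ 2 - a ^ 2) ^ ((5 : ℂ) / 2) *
            ((m : ℂ) ^ 2 - b ^ 2) ^ ((5 : ℂ) / 2) / (m : ℂ) ^ (10 : ℕ)) *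
          (((m : ℝ) ^ 10 * Real.Gamma (m + 1) ^ 2 /
            (Real.Gamma (m + 1 + 14 / 3) * Real.Gamma (m + 1 + 16 / 3)) : ℝ) : ℂ))
      atTop (nhds (4 * (Real.pi : ℂ) ^ 2 * a ^ 3 * b ^ 3 / (a ^ 2 - b ^ 2) ^ 3)) :=
  tendsto_period_determinant_approximation_general a b
end
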